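/- arXiv:2412.17890 — 2 statements merged into one kernel-verified Lean document; each statement's English description precedes it below -/
import Mathlib

section
/- Let (v, a) be a product two-action game with m players such that v = (0,…,0) and for every j ∈ {1,…,m} and all distinct i₁, i₂ ∈ {1,…,m} ∖ {j}: a^{i₁}_j > a^{i₂}_j if and only if δ^j(i₁) < δ^j(i₂) (i.e., the j-th associated permutation σ^j equals δ^j). Then the game is maximal: for every permutation π of {1,…,m} with F(π) ≠ ∅, exactly 2^{|F(π)|−1} elements of EC(π) are Nash equilibria. -/
open Finset
open scoped Classical

/-- `λ^i(γ) = (−1)^{v_i} · ∏_{j ≠ i} (γ_j − a^i_j)` for a product two-action game. -/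
def lamP {m : ℕ} (v : Fin m → ℕ) (a : Fin m → Fin m → ℝ) (i : Fin m) (γ : Fin m → ℝ) : ℝ :=
  (-1 : ℝ) ^ (v i) * ∏ j ∈ Finset.univ.erase i, (γ j - a i j)

/-- `γ ∈ [0,1]^m`. -/
def InCube {m : ℕ} (γ : Fin m → ℝ) : Prop := ∀ i, 0 ≤ γ i ∧ γ i ≤ 1

/-- Equilibrium candidate: `λ^i(γ) = 0` for every `i` with `0 < γ_i < 1`. -/
def IsEqCand {m : ℕ} (v : Fin m → ℕ) (a : Fin m → Fin m → ℝ) (γ : Fin m → ℝ) : Prop :=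
  InCube γ ∧ ∀ i, 0 < γ i → γ i < 1 → lamP v a i γ = 0

/-- Nash equilibrium of the product two-action game. -/
def IsNashP {m : ℕ} (v : Fin m → ℕ) (a : Fin m → Fin m → ℝ) (γ : Fin m → ℝ) : Prop :=
  IsEqCand v a γ ∧ (∀ i, γ i = 0 → lamP v a i γ ≤ 0) ∧ (∀ i, γ i = 1 → 0 ≤ lamP v a i γ)

/-- The coefficient conditions of a product two-action game:
`a^i_j ∈ (0,1)` and `a^{i₁}_j ≠ a^{i₂}_j` for distinct `i₁, i₂ ≠ j`. -/
def GoodCoef {m : ℕ} (a : Fin m → Fin m → ℝ) : Prop :=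
  (∀ i j : Fin m, i ≠ j → 0 < a i j ∧ a i j < 1) ∧
  (∀ j i₁ i₂ : Fin m, i₁ ≠ j → i₂ ≠ j → i₁ ≠ i₂ → a i₁ j ≠ a i₂ j)

/-- `EC(π)`. -/
def ECset {m : ℕ} (a : Fin m → Fin m → ℝ) (π : Equiv.Perm (Fin m)) : Set (Fin m → ℝ) :=
  {γ | InCube γ ∧ (∀ i, π i = i → (γ i = 0 ∨ γ i = 1)) ∧ (∀ j, π j ≠ j → γ j = a (π j) j)}

/-- `|F(π)|`, the number of fixed points of `π`. -/
def fixedCard {m : ℕ} (π : Equiv.Perm (Fin m)) : ℕ :=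
  (Finset.univ.filter fun i => π i = i).card

/-- `V(m) = Σ_{l=0}^m binom(m,l)·2^l·!(m−l)`. -/
def Vnum (m : ℕ) : ℕ :=
  ∑ l ∈ Finset.range (m + 1), Nat.choose m l * 2 ^ l * numDerangements (m - l)

/-- `σj` is the `j`-th associated permutation: it fixes `j` and sorts the
`a^i_j` (`i ≠ j`) decreasingly. -/
def IsAssoc {m : ℕ} (a : Fin m → Fin m → ℝ) (j : Fin m) (σj : Equiv.Perm (Fin m)) : Prop :=
  σj j = j ∧ ∀ i₁ i₂ : Fin m, i₁ ≠ j → i₂ ≠ j → i₁ ≠ i₂ → (σj i₁ < σj i₂ ↔ a i₂ j < a i₁ j)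

/-- The increment `Inc(γ,i)` of an equilibrium candidate `γ ∈ EC(π)` at `i ∈ F(π)`. -/
noncomputable def IncMap {m : ℕ} (v : Fin m → ℕ) (σ : Fin m → Equiv.Perm (Fin m))
    (π : Equiv.Perm (Fin m)) (γ : Fin m → ℝ) (i : Fin m) : ℕ :=
  (1 + (if γ i = 1 then 1 else 0) + v i
    + (Finset.univ.filter fun k => π k = k ∧ k ≠ i ∧ γ k = 0).card
    + ∑ j ∈ Finset.univ.filter (fun j => π j ≠ j),
        (if (σ j) i ≤ (σ j) (π j) then 1 else 0)) % 2

/-- `g(π)`: the equilibrium candidate in `EC(π)` with `γ_i = 1` for all `i ∈ F(π)`. -/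
noncomputable def gP {m : ℕ} (a : Fin m → Fin m → ℝ) (π : Equiv.Perm (Fin m)) : Fin m → ℝ :=
  fun j => if π j = j then 1 else a (π j) j

/-- A product two-action game is maximal if for every permutation `π` with
`F(π) ≠ ∅` exactly `2^{|F(π)|−1}` elements of `EC(π)` are Nash equilibria. -/
def IsMaximal {m : ℕ} (v : Fin m → ℕ) (a : Fin m → Fin m → ℝ) : Prop :=
  ∀ π : Equiv.Perm (Fin m), (∃ i, π i = i) →
    {γ ∈ ECset a π | IsNashP v a γ}.ncard = 2 ^ (fixedCard π - 1)

/-- `χ(a,b) = 1` iff `a ≥ b` (on naturals). -/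
def chiN (x y : ℕ) : ℕ := if y ≤ x then 1 else 0

/-- The permutation `δ^i` of `{1,…,m}`. -/
def deltaFun (m i j : ℕ) : ℕ :=
  if j = i then i
  else if j < i then m - i + j + chiN (m - i + j) i
  else j - i + chiN (j - i) i

def rdiffN (m i j : ℕ) : ℕ := (m + i - j) % m

lemma rdiffN_eq {m i j : ℕ} (hi : i < m) (hj : j < m) :
    rdiffN m i j = if j ≤ i then i - j else m + i - j := by
  unfold rdiffN
  split
  · have h : m + i - j = m + (i - j) := by omega
    rw [h, Nat.add_mod_left]
    exact Nat.mod_eq_of_lt (by omega)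
  · exact Nat.mod_eq_of_lt (by omega)

lemma rdiffN_inj {m i j k : ℕ} (hi : i < m) (hj : j < m) (hk : k < m)
    (h : rdiffN m i j = rdiffN m k j) : i = k := by
  rw [rdiffN_eq hi hj, rdiffN_eq hk hj] at h
  split_ifs at h <;> omega

lemma rdiff_key {m i j k : ℕ} (hi : i < m) (hj : j < m) (hk : k < m)
    (hij : i ≠ j) (hik : i ≠ k) (hkj : k ≠ j) :
    rdiffN m i j + rdiffN m k i + (if rdiffN m i j < rdiffN m k j then m else 0)
      = rdiffN m k j + m := by
  rw [rdiffN_eq hi hj, rdiffN_eq hk hi, rdiffN_eq hk hj]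
  split_ifs <;> omega

lemma rdiff_symm {m i j : ℕ} (hi : i < m) (hj : j < m) (hij : i ≠ j) :
    rdiffN m i j + rdiffN m j i = m := by
  rw [rdiffN_eq hi hj, rdiffN_eq hj hi]
  split_ifs <;> omega

lemma delta_eq {m i j : ℕ} (hi : i < m) (hj : j < m) (hij : i ≠ j) :
    deltaFun m (j + 1) (i + 1) = rdiffN m i j + chiN (rdiffN m i j) (j + 1) := by
  rw [rdiffN_eq hi hj]
  unfold deltaFun chiN
  split_ifs <;> omega

lemma delta_rdiff {m i j k : ℕ} (hi : i < m) (hj : j < m) (hk : k < m)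
    (hij : i ≠ j) (hkj : k ≠ j) :
    (deltaFun m (j + 1) (i + 1) < deltaFun m (j + 1) (k + 1) ↔
      rdiffN m i j < rdiffN m k j) := by
  rw [delta_eq hi hj hij, delta_eq hk hj hkj]
  unfold chiN
  split_ifs <;> omega

lemma prod_pos_iff_even {ι : Type*} (s : Finset ι) (f : ι → ℝ)
    (hf : ∀ j ∈ s, f j ≠ 0) :
    (0 < ∏ j ∈ s, f j ↔ Even ((s.filter fun j => f j < 0).card)) := by
  classical
  induction s using Finset.induction_on with
  | empty => simp
  | @insert a s ha ih =>
    have hfa : f a ≠ 0 := hf a (mem_insert_self a s)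
    have hs : ∀ j ∈ s, f j ≠ 0 := fun j hj => hf j (mem_insert_of_mem hj)
    have hps : (∏ j ∈ s, f j) ≠ 0 := Finset.prod_ne_zero_iff.2 hs
    rw [Finset.prod_insert ha, Finset.filter_insert]
    by_cases hneg : f a < 0
    · rw [if_pos hneg, Finset.card_insert_of_notMem (fun h => ha (Finset.mem_of_mem_filter a h))]
      rw [Nat.even_add_one, ← ih hs]
      constructor
      · intro h hpos
        nlinarith
      · intro h
        rcases hps.lt_or_gt with h1 | h1
        · nlinarith
        · exact absurd h1 h
    · have hpos : 0 < f a := lt_of_le_of_ne (not_lt.1 hneg) (Ne.symm hfa)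
      rw [if_neg hneg, ← ih hs]
      constructor
      · intro h
        nlinarith
      · intro h
        exact mul_pos hpos h


lemma count_mul {m : ℕ} (π : Equiv.Perm (Fin m)) {i : Fin m} (hi : π i = i) :
    m * (((univ.filter fun j => π j ≠ j)).filter fun j =>
        rdiffN m i.1 j.1 < rdiffN m (π j).1 j.1).card
      = ∑ j ∈ univ.filter fun j => π j ≠ j, rdiffN m (π j).1 j.1 := by
  classical
  set NF := univ.filter fun j : Fin m => π j ≠ j with hNF
  have hper : ∀ j ∈ NF, rdiffN m i.1 j.1 + rdiffN m (π j).1 i.1 +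
      (if rdiffN m i.1 j.1 < rdiffN m (π j).1 j.1 then m else 0)
      = rdiffN m (π j).1 j.1 + m := by
    intro j hj
    have hj' : π j ≠ j := by simpa [hNF] using hj
    have hij : i ≠ j := fun h => hj' (by rw [← h, hi, h])
    have hpi : (π j).1 ≠ i.1 := by
      intro h
      have hpp : π j = π i := by rw [hi]; exact Fin.val_injective h
      exact hij (π.injective hpp).symm
    exact rdiff_key i.isLt j.isLt (π j).isLt
      (fun h => hij (Fin.val_injective h))
      (fun h => hpi h.symm)
      (fun h => hj' (Fin.val_injective h))
  have hsum := Finset.sum_congr rfl hper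
  rw [Finset.sum_add_distrib, Finset.sum_add_distrib] at hsum
  have h1 : ∑ j ∈ NF, (if rdiffN m i.1 j.1 < rdiffN m (π j).1 j.1 then m else 0)
      = m * (NF.filter fun j => rdiffN m i.1 j.1 < rdiffN m (π j).1 j.1).card := by
    rw [← Finset.sum_filter, Finset.sum_const, smul_eq_mul, mul_comm]
  have h2 : ∑ j ∈ NF, rdiffN m (π j).1 i.1 = ∑ j ∈ NF, rdiffN m j.1 i.1 := by
    refine Equiv.Perm.sum_comp π NF (fun k => rdiffN m k.1 i.1) ?_
    intro x hx
    simpa [hNF] using hx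
  have h3 : ∑ j ∈ NF, (rdiffN m i.1 j.1 + rdiffN m j.1 i.1) = NF.card * m := by
    rw [Finset.sum_congr rfl (fun j hj => rdiff_symm i.isLt j.isLt ?_), Finset.sum_const,
      smul_eq_mul]
    intro h
    have hj' : π j ≠ j := by simpa [hNF] using hj
    exact hj' (by rw [← Fin.val_injective h, hi, Fin.val_injective h])
  rw [Finset.sum_add_distrib] at h3
  rw [h1, h2, Finset.sum_add_distrib, Finset.sum_const, smul_eq_mul] at hsum
  omega

lemma count_const {m : ℕ} (π : Equiv.Perm (Fin m)) {i₁ i₂ : Fin m}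
    (h1 : π i₁ = i₁) (h2 : π i₂ = i₂) :
    (((univ.filter fun j => π j ≠ j)).filter fun j =>
        rdiffN m i₁.1 j.1 < rdiffN m (π j).1 j.1).card =
    (((univ.filter fun j => π j ≠ j)).filter fun j =>
        rdiffN m i₂.1 j.1 < rdiffN m (π j).1 j.1).card := by
  have hm : 0 < m := i₁.pos
  have := (count_mul π h1).trans (count_mul π h2).symm
  exact Nat.eq_of_mul_eq_mul_left hm this

lemma card_powerset_even {α : Type*} [DecidableEq α] (F : Finset α) (hF : F.Nonempty) (C : ℕ) :
    (F.powerset.filter fun A => Even (A.card + C)).card = 2 ^ (F.card - 1) := by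
  classical
  obtain ⟨i₀, hi₀⟩ := hF
  set E := F.powerset.filter fun A => Even (A.card + C) with hE
  set O := F.powerset.filter fun A => ¬ Even (A.card + C) with hO
  have hEO : E.card + O.card = 2 ^ F.card := by
    rw [hE, hO, Finset.card_filter_add_card_filter_not, Finset.card_powerset]
  have hcard : E.card = O.card := by
    refine Finset.card_bij' (fun A _ => if i₀ ∈ A then A.erase i₀ else insert i₀ A)
      (fun A _ => if i₀ ∈ A then A.erase i₀ else insert i₀ A) ?_ ?_ ?_ ?_
    · intro A hA
      rw [hE, Finset.mem_filter, Finset.mem_powerset] at hA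
      rw [hO, Finset.mem_filter, Finset.mem_powerset]
      by_cases h : i₀ ∈ A
      · rw [if_pos h]
        refine ⟨(Finset.erase_subset _ _).trans hA.1, ?_⟩
        rw [Finset.card_erase_of_mem h]
        have hc : 1 ≤ A.card := Finset.card_pos.2 ⟨i₀, h⟩
        have := hA.2
        rw [Nat.even_iff] at this ⊢
        omega
      · rw [if_neg h]
        refine ⟨Finset.insert_subset hi₀ hA.1, ?_⟩
        rw [Finset.card_insert_of_notMem h]
        have := hA.2
        rw [Nat.even_iff] at this ⊢
        omega
    · intro A hA
      rw [hO, Finset.mem_filter, Finset.mem_powerset] at hA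
      rw [hE, Finset.mem_filter, Finset.mem_powerset]
      by_cases h : i₀ ∈ A
      · rw [if_pos h]
        refine ⟨(Finset.erase_subset _ _).trans hA.1, ?_⟩
        rw [Finset.card_erase_of_mem h]
        have hc : 1 ≤ A.card := Finset.card_pos.2 ⟨i₀, h⟩
        have := hA.2
        rw [Nat.even_iff] at this ⊢
        omega
      · rw [if_neg h]
        refine ⟨Finset.insert_subset hi₀ hA.1, ?_⟩
        rw [Finset.card_insert_of_notMem h]
        have := hA.2
        rw [Nat.even_iff] at this ⊢
        omega
    · intro A hA
      by_cases h : i₀ ∈ A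
      · rw [if_pos h, if_neg (Finset.notMem_erase i₀ A), Finset.insert_erase h]
      · rw [if_neg h, if_pos (Finset.mem_insert_self i₀ A), Finset.erase_insert h]
    · intro A hA
      by_cases h : i₀ ∈ A
      · rw [if_pos h, if_neg (Finset.notMem_erase i₀ A), Finset.insert_erase h]
      · rw [if_neg h, if_pos (Finset.mem_insert_self i₀ A), Finset.erase_insert h]
  have hn : 1 ≤ F.card := Finset.card_pos.2 ⟨i₀, hi₀⟩
  have hpow : 2 ^ F.card = 2 * 2 ^ (F.card - 1) := by
    conv_lhs => rw [← Nat.sub_add_cancel hn]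
    rw [pow_succ, mul_comm]
  omega


/-- If `v = (0,…,0)` and the associated permutations `σ^j` equal `δ^j`
(i.e. `a^{i₁}_j > a^{i₂}_j ↔ δ^j(i₁) < δ^j(i₂)` for distinct `i₁, i₂ ≠ j`), then the
game is maximal: for every `π` with `F(π) ≠ ∅`, exactly `2^{|F(π)|−1}` elements of
`EC(π)` are Nash equilibria. (Player `k : Fin m` corresponds to `k+1 ∈ {1,…,m}`.) -/
theorem stmt13 {m : ℕ} (hm : 1 ≤ m) (v : Fin m → ℕ) (hv0 : ∀ i, v i = 0)
    (a : Fin m → Fin m → ℝ) (ha : GoodCoef a)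
    (hδ : ∀ j i₁ i₂ : Fin m, i₁ ≠ j → i₂ ≠ j → i₁ ≠ i₂ →
      (a i₂ j < a i₁ j ↔
        deltaFun m (j.1 + 1) (i₁.1 + 1) < deltaFun m (j.1 + 1) (i₂.1 + 1))) :
    ∀ π : Equiv.Perm (Fin m), (∃ i, π i = i) →
      {γ ∈ ECset a π | IsNashP v a γ}.ncard = 2 ^ (fixedCard π - 1) := by
  intro π hfp
  obtain ⟨i₀, hi₀⟩ := hfp
  classical
  set F : Finset (Fin m) := univ.filter fun i => π i = i with hF
  set NF : Finset (Fin m) := univ.filter fun j => π j ≠ j with hNF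
  set C : ℕ := (NF.filter fun j => rdiffN m i₀.1 j.1 < rdiffN m (π j).1 j.1).card with hC
  have hi₀F : i₀ ∈ F := by simp [hF, hi₀]
  -- Characterization of Nash equilibria inside EC(π)
  have char : ∀ γ, γ ∈ ECset a π →
      (IsNashP v a γ ↔ Even ((F.filter fun i => γ i = 0).card + C)) := by
    intro γ hγ
    obtain ⟨hcube, hfx, hnf⟩ := hγ
    have heq : IsEqCand v a γ := by
      refine ⟨hcube, fun i h0 h1 => ?_⟩
      by_cases hi : π i = i
      · rcases hfx i hi with h | h
        · rw [h] at h0; exact absurd h0 (lt_irrefl 0)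
        · rw [h] at h1; exact absurd h1 (lt_irrefl 1)
      · set k := π.symm i with hk
        have hπk : π k = i := π.apply_symm_apply i
        have hki : k ≠ i := fun h => hi (h ▸ hπk)
        have hknf : π k ≠ k := by rw [hπk]; exact Ne.symm hki
        have hγk : γ k = a i k := by rw [hnf k hknf, hπk]
        unfold lamP
        rw [Finset.prod_eq_zero (Finset.mem_erase.2 ⟨hki, mem_univ k⟩) (by rw [hγk]; ring)]
        ring
    have hsign : ∀ i, π i = i → lamP v a i γ ≠ 0 ∧
        (0 < lamP v a i γ ↔ Even ((((F.erase i)).filter fun j => γ j = 0).card + C)) := by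
      intro i hπi
      have hne : ∀ j ∈ univ.erase i, γ j - a i j ≠ 0 := by
        intro j hj
        have hji : j ≠ i := (Finset.mem_erase.1 hj).1
        by_cases hjf : π j = j
        · have hab := ha.1 i j (Ne.symm hji)
          rcases hfx j hjf with h | h <;> rw [h] <;> intro hc <;> nlinarith [hab.1, hab.2]
        · have hπji : π j ≠ i := fun h => hji (π.injective (h.trans hπi.symm))
          have := ha.2 j (π j) i hjf (Ne.symm hji) hπji
          rw [hnf j hjf]
          exact sub_ne_zero.2 this
      have hι : lamP v a i γ = ∏ j ∈ univ.erase i, (γ j - a i j) := by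
        unfold lamP; rw [hv0 i]; ring
      have hnz : lamP v a i γ ≠ 0 := by
        rw [hι]; exact Finset.prod_ne_zero_iff.2 hne
      refine ⟨hnz, ?_⟩
      rw [hι, prod_pos_iff_even _ _ hne]
      have hset : univ.erase i = (F.erase i) ∪ NF := by
        ext j
        constructor
        · intro hj
          rw [Finset.mem_union]
          rcases Finset.mem_erase.1 hj with ⟨hji, -⟩
          by_cases h : π j = j
          · exact Or.inl (Finset.mem_erase.2 ⟨hji, Finset.mem_filter.2 ⟨mem_univ j, h⟩⟩)
          · exact Or.inr (Finset.mem_filter.2 ⟨mem_univ j, h⟩)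
        · intro hj
          rcases Finset.mem_union.1 hj with h | h
          · exact Finset.mem_erase.2 ⟨(Finset.mem_erase.1 h).1, mem_univ j⟩
          · refine Finset.mem_erase.2 ⟨?_, mem_univ j⟩
            intro he
            exact (Finset.mem_filter.1 h).2 (he ▸ hπi)
      have hdisj : Disjoint (F.erase i) NF := by
        rw [Finset.disjoint_left]
        intro x hx hx'
        have h1 : π x = x := (Finset.mem_filter.1 (Finset.mem_of_mem_erase hx)).2
        have h2 : π x ≠ x := (Finset.mem_filter.1 hx').2
        exact h2 h1
      rw [hset, Finset.filter_union,
        Finset.card_union_of_disjoint (Finset.disjoint_filter_filter hdisj)]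
      have hA : ((F.erase i).filter fun j => γ j - a i j < 0)
          = ((F.erase i).filter fun j => γ j = 0) := by
        apply Finset.filter_congr
        intro j hj
        have hji : j ≠ i := (Finset.mem_erase.1 hj).1
        have hjfix : π j = j := (Finset.mem_filter.1 (Finset.mem_of_mem_erase hj)).2
        have hab := ha.1 i j (Ne.symm hji)
        rcases hfx j hjfix with h | h <;> rw [h] <;> constructor <;> intro hc
        · rfl
        · linarith [hab.1]
        · exfalso; linarith [hab.2]
        · exact absurd hc one_ne_zero
      have hB : (NF.filter fun j => γ j - a i j < 0)
          = (NF.filter fun j => rdiffN m i.1 j.1 < rdiffN m (π j).1 j.1) := by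
        apply Finset.filter_congr
        intro j hj
        have hjnf : π j ≠ j := (Finset.mem_filter.1 hj).2
        have hji : j ≠ i := fun h => hjnf (by rw [h, hπi])
        have hπji : π j ≠ i := fun h => hji (π.injective (h.trans hπi.symm))
        rw [hnf j hjnf, sub_neg,
          hδ j i (π j) (Ne.symm hji) hjnf (Ne.symm hπji)]
        exact delta_rdiff i.isLt j.isLt (π j).isLt
          (fun h => hji (Fin.val_injective h).symm)
          (fun h => hjnf (Fin.val_injective h))
      rw [hA, hB, hC, hNF]
      rw [count_const (m := m) (π := π) hπi hi₀]
    set Z := (F.filter fun i => γ i = 0).card with hZ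
    constructor
    · intro hN
      rcases hfx i₀ hi₀ with h0 | h1
      · have hle := hN.2.1 i₀ h0
        have hs := hsign i₀ hi₀
        have hlt : ¬ 0 < lamP v a i₀ γ := not_lt.2 hle
        have hodd : ¬ Even (((F.erase i₀).filter fun j => γ j = 0).card + C) :=
          fun he => hlt (hs.2.2 he)
        have hi₀mem : i₀ ∈ F.filter fun j => γ j = 0 := Finset.mem_filter.2 ⟨hi₀F, h0⟩
        rw [Finset.filter_erase, Finset.card_erase_of_mem hi₀mem] at hodd
        have hZ1 : 1 ≤ Z := Finset.card_pos.2 ⟨i₀, hi₀mem⟩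
        simp only [Nat.even_iff] at hodd ⊢
        omega
      · have hge := hN.2.2 i₀ h1
        have hs := hsign i₀ hi₀
        have hpos : 0 < lamP v a i₀ γ := lt_of_le_of_ne hge (Ne.symm hs.1)
        have hev := hs.2.1 hpos
        have hi₀mem : i₀ ∉ F.filter fun j => γ j = 0 := by
          intro hmem
          have := (Finset.mem_filter.1 hmem).2
          rw [h1] at this
          exact one_ne_zero this
        rwa [Finset.filter_erase, Finset.erase_eq_of_notMem hi₀mem] at hev
    · intro hEven
      refine ⟨heq, ?_, ?_⟩
      · intro i h0
        have hπi : π i = i := by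
          by_contra h
          have hval := hnf i h
          have hab := ha.1 (π i) i h
          rw [hval] at h0
          linarith [hab.1]
        have hs := hsign i hπi
        have hiF : i ∈ F.filter fun j => γ j = 0 :=
          Finset.mem_filter.2 ⟨by simp [hF, hπi], h0⟩
        have hnlt : ¬ 0 < lamP v a i γ := by
          rw [hs.2, Finset.filter_erase, Finset.card_erase_of_mem hiF]
          have hZ1 : 1 ≤ Z := Finset.card_pos.2 ⟨i, hiF⟩
          simp only [Nat.even_iff] at hEven ⊢
          omega
        exact le_of_not_gt hnlt
      · intro i h1
        have hπi : π i = i := by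
          by_contra h
          have hval := hnf i h
          have hab := ha.1 (π i) i h
          rw [hval] at h1
          linarith [hab.2]
        have hs := hsign i hπi
        have hiF : i ∉ F.filter fun j => γ j = 0 := by
          intro hmem
          have := (Finset.mem_filter.1 hmem).2
          rw [h1] at this
          exact one_ne_zero this
        have hpos : 0 < lamP v a i γ := by
          rw [hs.2, Finset.filter_erase, Finset.erase_eq_of_notMem hiF]
          exact hEven
        exact le_of_lt hpos
  -- the explicit parametrization
  have hkey : {γ ∈ ECset a π | IsNashP v a γ} =
      (((F.powerset.filter fun A => Even (A.card + C)).image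
        (fun A => fun j => if π j = j then (if j ∈ A then (0:ℝ) else 1) else a (π j) j) :
          Finset (Fin m → ℝ)) : Set (Fin m → ℝ)) := by
    ext γ
    simp only [Set.mem_setOf_eq, Finset.coe_image, Set.mem_image, Finset.mem_coe,
      Finset.mem_filter, Finset.mem_powerset]
    constructor
    · rintro ⟨hEC, hN⟩
      refine ⟨F.filter fun i => γ i = 0, ⟨Finset.filter_subset _ _, (char γ hEC).1 hN⟩, ?_⟩
      obtain ⟨hcube, hfx, hnf⟩ := hEC
      funext j
      by_cases h : π j = j
      · rw [if_pos h]
        rcases hfx j h with h0 | h1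
        · have hmem : j ∈ F.filter fun i => γ i = 0 :=
            Finset.mem_filter.2 ⟨Finset.mem_filter.2 ⟨mem_univ j, h⟩, h0⟩
          rw [if_pos hmem]
          exact h0.symm
        · have hmem : j ∉ F.filter fun i => γ i = 0 := by
            intro hmem
            have := (Finset.mem_filter.1 hmem).2
            rw [h1] at this
            exact one_ne_zero this
          rw [if_neg hmem]
          exact h1.symm
      · rw [if_neg h]
        exact (hnf j h).symm
    · rintro ⟨A, ⟨hAF, hAe⟩, rfl⟩
      have hEC : (fun j => if π j = j then (if j ∈ A then (0:ℝ) else 1) else a (π j) j)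
          ∈ ECset a π := by
        refine ⟨?_, ?_, ?_⟩
        · intro j
          by_cases h : π j = j
          · by_cases h' : j ∈ A <;> simp [h, h']
          · have hab := ha.1 (π j) j h
            simp only [if_neg h]
            exact ⟨le_of_lt hab.1, le_of_lt hab.2⟩
        · intro i hi
          dsimp only
          rw [if_pos hi]
          by_cases h' : i ∈ A
          · exact Or.inl (if_pos h')
          · exact Or.inr (if_neg h')
        · intro j hj
          dsimp only
          rw [if_neg hj]
      refine ⟨hEC, (char _ hEC).2 ?_⟩
      have hfe : (F.filter fun i =>
          (if π i = i then (if i ∈ A then (0:ℝ) else 1) else a (π i) i) = 0) = A := by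
        ext x
        simp only [Finset.mem_filter, hF, mem_univ, true_and]
        constructor
        · rintro ⟨hx, hx0⟩
          by_contra hxA
          rw [if_pos hx, if_neg hxA] at hx0
          exact one_ne_zero hx0
        · intro hxA
          have hx : π x = x := by
            have := hAF hxA
            rw [hF] at this
            exact (Finset.mem_filter.1 this).2
          exact ⟨hx, by rw [if_pos hx, if_pos hxA]⟩
      rw [hfe]
      exact hAe
  rw [hkey, Set.ncard_coe_finset]
  have hinj : Set.InjOn
      (fun A => fun j => if π j = j then (if j ∈ A then (0:ℝ) else 1) else a (π j) j)
      ((F.powerset.filter fun A => Even (A.card + C) : Finset (Finset (Fin m))) :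
        Set (Finset (Fin m))) := by
    intro A hA B hB hAB
    simp only [Finset.coe_filter, Set.mem_setOf_eq, Finset.mem_powerset] at hA hB
    ext x
    constructor
    · intro hxA
      have hx : π x = x := (Finset.mem_filter.1 (hA.1 hxA)).2
      have := congrFun hAB x
      dsimp only at this
      rw [if_pos hx, if_pos hx, if_pos hxA] at this
      by_contra hxB
      rw [if_neg hxB] at this
      exact one_ne_zero this.symm
    · intro hxB
      have hx : π x = x := (Finset.mem_filter.1 (hB.1 hxB)).2
      have := congrFun hAB x
      dsimp only at this
      rw [if_pos hx, if_pos hx, if_pos hxB] at this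
      by_contra hxA
      rw [if_neg hxA] at this
      exact one_ne_zero this
  rw [Finset.card_image_of_injOn hinj, card_powerset_even F ⟨i₀, hi₀F⟩ C]
  rfl
end

section
/- Let (v, a) be a maximal product two-action game with m players. Then the set of Nash equilibria γ ∈ [0,1]^m is finite of cardinality (V(m) + !m)/2, where V(m) = Σ_{l=0}^m binom(m,l)·2^l·!(m−l). -/
open Finset
open scoped Classical

/-! Every equilibrium candidate `γ` lies in `EC(π)` for some permutation `π`: an interior
coordinate `i` has, as `λ^i(γ) = 0`, a partner `k ≠ i` with `γ_k = a^i_k`, which is again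
interior, and `i ↦ k` is injective because the `a^i_k` are distinct for fixed `k`. The sets
`EC(π)` are pairwise disjoint, so the Nash equilibria are counted permutation by permutation.
Maximality gives `2^{|F(π)|-1}` of them in `EC(π)` when `π` has a fixed point, while for a
derangement `EC(π)` is a single point at which every `λ^i` vanishes. Thus twice the count is
`Σ_π 2^{|F(π)|} + !m`, and grouping permutations by their set of fixed points turns the sum
into `V(m)`. -/

open Equiv

section PermutationCounting

variable {α : Type*} [Fintype α] [DecidableEq α]

theorem card_perm_fixed_finset_eq (S : Finset α) :
    #{π : Perm α | univ.filter (fun i => π i = i) = S} =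
      numDerangements (Fintype.card α - #S) := by
  have e : {π : Perm α // univ.filter (fun i => π i = i) = S} ≃ derangements {i // i ∉ S} :=
    (Equiv.subtypeEquivRight fun π => by
      rw [Finset.ext_iff]
      simp only [mem_filter, mem_univ, true_and, Function.mem_fixedPoints, Function.IsFixedPt,
        not_not]
      exact forall_congr' fun _ => Iff.comm).trans (derangements.subtypeEquiv (· ∉ S)).symm
  rw [← Fintype.card_subtype, Fintype.card_congr e, card_derangements_eq_numDerangements,
    Fintype.card_subtype_compl, Fintype.card_coe]

theorem card_perm_card_fixed_eq (l : ℕ) :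
    #{π : Perm α | #{i | π i = i} = l} =
      (Fintype.card α).choose l * numDerangements (Fintype.card α - l) := by
  rw [card_eq_sum_card_fiberwise (f := fun π : Perm α => univ.filter fun i => π i = i)
    (t := powersetCard l univ) (fun π hπ => by simpa using hπ)]
  have fiber : ∀ S ∈ powersetCard l (univ : Finset α),
      #{π ∈ {π : Perm α | #{i | π i = i} = l} | univ.filter (fun i => π i = i) = S} =
        numDerangements (Fintype.card α - l) := by
    intro S hS
    rw [mem_powersetCard_univ] at hS
    rw [filter_filter, ← hS, ← card_perm_fixed_finset_eq]
    congr 1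
    exact filter_congr fun π _ => ⟨And.right, fun h => ⟨congrArg card h, h⟩⟩
  rw [sum_congr rfl fiber, sum_const, card_powersetCard, card_univ, smul_eq_mul]

theorem sum_two_pow_card_fixed :
    ∑ π : Perm α, 2 ^ #{i | π i = i} =
      ∑ l ∈ range (Fintype.card α + 1),
        (Fintype.card α).choose l * 2 ^ l * numDerangements (Fintype.card α - l) := by
  rw [← sum_fiberwise_of_maps_to (g := fun π : Perm α => #{i | π i = i})
    (t := range (Fintype.card α + 1))
    (fun π _ => mem_range_succ_iff.mpr (card_le_univ _))]
  refine sum_congr rfl fun l _ => ?_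
  rw [sum_congr rfl fun π hπ => by rw [(mem_filter.mp hπ).2], sum_const,
    card_perm_card_fixed_eq, smul_eq_mul]
  ring

end PermutationCounting

section ProductGame

variable {m : ℕ} {v : Fin m → ℕ} {a : Fin m → Fin m → ℝ}

theorem lamP_eq_zero_iff {i : Fin m} {γ : Fin m → ℝ} :
    lamP v a i γ = 0 ↔ ∃ k ≠ i, γ k = a i k := by
  simp [lamP, prod_eq_zero_iff, sub_eq_zero]

theorem lamP_eq_zero_of_mem_ECset {π : Perm (Fin m)} {γ : Fin m → ℝ} (hγ : γ ∈ ECset a π)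
    {i : Fin m} (hi : π i ≠ i) : lamP v a i γ = 0 := by
  have hk : π.symm i ≠ i := fun h => hi (by simpa using (congrArg π h).symm)
  refine lamP_eq_zero_iff.mpr ⟨π.symm i, hk, ?_⟩
  rw [hγ.2.2 _ (by simpa using hk.symm), apply_symm_apply]

theorem finite_ECset (a : Fin m → Fin m → ℝ) (π : Perm (Fin m)) : (ECset a π).Finite := by
  refine (Set.Finite.pi (t := fun j => {0, 1, a (π j) j}) fun _ => Set.toFinite _).subset ?_
  intro γ hγ j _
  by_cases hj : π j = j
  · rcases hγ.2.1 j hj with h | h <;> simp [h]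
  · simp [hγ.2.2 j hj]

theorem disjoint_ECset (ha : GoodCoef a) {π₁ π₂ : Perm (Fin m)} (h : π₁ ≠ π₂) :
    Disjoint (ECset a π₁) (ECset a π₂) := by
  have interior : ∀ {π : Perm (Fin m)} {γ j}, γ ∈ ECset a π → π j ≠ j → 0 < γ j ∧ γ j < 1 :=
    fun hγ hj => (hγ.2.2 _ hj).symm ▸ ha.1 _ _ hj
  rw [Set.disjoint_left]
  intro γ h₁ h₂
  obtain ⟨j, hj⟩ : ∃ j, π₁ j ≠ π₂ j := not_forall.mp fun h' => h (Equiv.ext h')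
  by_cases e₁ : π₁ j = j <;> by_cases e₂ : π₂ j = j
  · exact hj (e₁.trans e₂.symm)
  · have := interior h₂ e₂
    rcases h₁.2.1 j e₁ with h0 | h0 <;> rw [h0] at this <;> linarith [this.1, this.2]
  · have := interior h₁ e₁
    rcases h₂.2.1 j e₂ with h0 | h0 <;> rw [h0] at this <;> linarith [this.1, this.2]
  · exact ha.2 j _ _ e₁ e₂ hj ((h₁.2.2 j e₁).symm.trans (h₂.2.2 j e₂))

theorem IsEqCand.exists_mem_ECset (ha : GoodCoef a) {γ : Fin m → ℝ} (hγ : IsEqCand v a γ) :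
    ∃ π, γ ∈ ECset a π := by
  let Interior : Fin m → Prop := fun i => 0 < γ i ∧ γ i < 1
  have partner : ∀ i, ∃ k, if Interior i then k ≠ i ∧ γ k = a i k else k = i := by
    intro i
    by_cases hi : Interior i
    · simpa [hi] using lamP_eq_zero_iff.mp (hγ.2 i hi.1 hi.2)
    · exact ⟨i, by simp [hi]⟩
  choose g hg using partner
  have g_of_interior : ∀ {i}, Interior i → g i ≠ i ∧ γ (g i) = a i (g i) := fun {i} hi => by
    simpa [hi] using hg i
  have g_of_boundary : ∀ {i}, ¬Interior i → g i = i := fun {i} hi => by simpa [hi] using hg i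
  have interior_g : ∀ {i}, Interior i → Interior (g i) := fun {i} hi => by
    obtain ⟨hne, hval⟩ := g_of_interior hi
    show 0 < γ (g i) ∧ γ (g i) < 1
    rw [hval]
    exact ha.1 _ _ hne.symm
  have g_injective : Function.Injective g := by
    intro i j hij
    by_contra hne
    by_cases hi : Interior i <;> by_cases hj : Interior j
    · obtain ⟨hi₁, hi₂⟩ := g_of_interior hi
      obtain ⟨hj₁, hj₂⟩ := g_of_interior hj
      rw [hij] at hi₁ hi₂
      exact ha.2 (g j) i j hi₁.symm hj₁.symm hne (hi₂.symm.trans hj₂)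
    · exact hj (g_of_boundary hj ▸ hij ▸ interior_g hi)
    · exact hi (g_of_boundary hi ▸ hij.symm ▸ interior_g hj)
    · exact hne (by rwa [g_of_boundary hi, g_of_boundary hj] at hij)
  let σ := Equiv.ofBijective g (Finite.injective_iff_bijective.mp g_injective)
  have σ_symm : ∀ j, g (σ.symm j) = j := σ.apply_symm_apply
  refine ⟨σ.symm, hγ.1, fun i hi => ?_, fun j hj => ?_⟩
  · have hgi : g i = i := by simpa [hi] using σ_symm i
    by_contra! h
    exact (g_of_interior ⟨(hγ.1 i).1.lt_of_ne h.1.symm, (hγ.1 i).2.lt_of_ne h.2⟩).1 hgi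
  · have hi : Interior (σ.symm j) := by
      by_contra h'
      exact hj (by simpa [g_of_boundary h'] using σ_symm j)
    simpa [σ_symm] using (g_of_interior hi).2

theorem setOf_isNashP_eq_iUnion (ha : GoodCoef a) :
    {γ | IsNashP v a γ} = ⋃ π, {γ ∈ ECset a π | IsNashP v a γ} := by
  ext γ
  simp only [Set.mem_ofPred_eq, Set.mem_iUnion]
  exact ⟨fun h => (h.1.exists_mem_ECset ha).imp fun _ hπ => ⟨hπ, h⟩, fun ⟨_, h⟩ => h.2⟩

theorem ECset_eq_singleton_of_mem_derangements (ha : GoodCoef a) {π : Perm (Fin m)}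
    (hπ : π ∈ derangements (Fin m)) : ECset a π = {fun j => a (π j) j} := by
  ext γ
  refine ⟨fun hγ => funext fun j => hγ.2.2 j (hπ j), ?_⟩
  rintro rfl
  exact ⟨fun j => ⟨(ha.1 _ _ (hπ j)).1.le, (ha.1 _ _ (hπ j)).2.le⟩, fun i hi => absurd hi (hπ i),
    fun _ _ => rfl⟩

theorem isNashP_of_mem_ECset_of_mem_derangements {π : Perm (Fin m)}
    (hπ : π ∈ derangements (Fin m)) {γ : Fin m → ℝ} (hγ : γ ∈ ECset a π) : IsNashP v a γ :=
  have hlam : ∀ i, lamP v a i γ = 0 := fun i => lamP_eq_zero_of_mem_ECset hγ (hπ i)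
  ⟨⟨hγ.1, fun i _ _ => hlam i⟩, fun i _ => (hlam i).le, fun i _ => (hlam i).ge⟩

theorem two_mul_ncard_nash_ECset (ha : GoodCoef a) (hmax : IsMaximal v a) (π : Perm (Fin m)) :
    2 * {γ ∈ ECset a π | IsNashP v a γ}.ncard =
      2 ^ fixedCard π + if π ∈ derangements (Fin m) then 1 else 0 := by
  by_cases hπ : π ∈ derangements (Fin m)
  · have hfix : fixedCard π = 0 := card_eq_zero.mpr (filter_eq_empty_iff.mpr fun i _ => hπ i)
    have hsep : {γ ∈ ECset a π | IsNashP v a γ} = ECset a π :=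
      Set.sep_eq_self_iff_mem_true.mpr fun _ => isNashP_of_mem_ECset_of_mem_derangements hπ
    rw [hsep, ECset_eq_singleton_of_mem_derangements ha hπ, Set.ncard_singleton, hfix, if_pos hπ]
    rfl
  · obtain ⟨i, hi⟩ : ∃ i, π i = i := by simpa [derangements] using hπ
    have hfix : fixedCard π ≠ 0 := card_ne_zero.mpr ⟨i, mem_filter.mpr ⟨mem_univ i, hi⟩⟩
    rw [hmax π ⟨i, hi⟩, if_neg hπ, add_zero, ← pow_succ', Nat.sub_add_cancel (by omega)]

end ProductGame

theorem stmt14_general {m : ℕ} (v : Fin m → ℕ)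
    (a : Fin m → Fin m → ℝ) (ha : GoodCoef a) (hmax : IsMaximal v a) :
    {γ : Fin m → ℝ | IsNashP v a γ}.Finite ∧
    2 * {γ : Fin m → ℝ | IsNashP v a γ}.ncard = Vnum m + numDerangements m := by
  have hfin : ∀ π, {γ ∈ ECset a π | IsNashP v a γ}.Finite :=
    fun π => (finite_ECset a π).subset (Set.sep_subset _ _)
  rw [setOf_isNashP_eq_iUnion ha]
  refine ⟨Set.finite_iUnion hfin, ?_⟩
  have hdisj : Pairwise (Function.onFun Disjoint fun π => {γ ∈ ECset a π | IsNashP v a γ}) :=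
    fun _ _ h => (disjoint_ECset ha h).mono (Set.sep_subset _ _) (Set.sep_subset _ _)
  rw [Set.ncard_iUnion_of_finite hfin hdisj, finsum_eq_sum_of_fintype, mul_sum,
    sum_congr rfl fun π _ => two_mul_ncard_nash_ECset ha hmax π, sum_add_distrib, sum_boole,
    Nat.cast_id]
  congr 1
  · simpa [Vnum, fixedCard] using sum_two_pow_card_fixed (α := Fin m)
  · rw [← Fintype.card_subtype, card_derangements_eq_numDerangements, Fintype.card_fin]

/-- A maximal product two-action game has a finite set of Nash equilibria
of cardinality `(V(m) + !m)/2`. -/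
theorem stmt14 {m : ℕ} (hm : 1 ≤ m) (v : Fin m → ℕ) (hv : ∀ i, v i ≤ 1)
    (a : Fin m → Fin m → ℝ) (ha : GoodCoef a) (hmax : IsMaximal v a) :
    {γ : Fin m → ℝ | IsNashP v a γ}.Finite ∧
    2 * {γ : Fin m → ℝ | IsNashP v a γ}.ncard = Vnum m + numDerangements m :=
  stmt14_general v a ha hmax
end
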